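/- Let A, B, C be 2×2 matrices over the nonnegative reals with λ = max(a_{11}, a_{22}, (a_{12}a_{21})^{1/2}) > 0, μ = max(b_{11}, b_{22}, (b_{12}b_{21})^{1/2}) > 0 and max(c_{11}, c_{22}, c_{12}c_{21}) ≤ 1. Let V = {(f_A(x), f_B(x)) : x ∈ ℝ² positive, C ⊗ x ≤ x}. If tr(A ⊗ B) ≤ (max(λ, tr(A ⊗ C))) · (max(μ, tr(B ⊗ C))), then the set of Pareto-minimal points of V is the single point (max(λ, tr(A ⊗ C)), max(μ, tr(B ⊗ C))); otherwise it is the segment {(α, tr(A ⊗ B)/α) : max(λ, tr(A ⊗ C)) ≤ α ≤ tr(A ⊗ B)/max(μ, tr(B ⊗ C))}. -/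

import Mathlib

open scoped NNReal

/-- Square matrices over the max-times semifield of nonnegative reals. -/
abbrev TMat (n : ℕ) := Matrix (Fin n) (Fin n) ℝ≥0

/-- Tropical (max-times) matrix product. -/
noncomputable def tmul {n : ℕ} (A B : TMat n) : TMat n :=
  fun i j => Finset.univ.sup fun k => A i k * B k j

/-- Tropical (max-times) matrix-vector product. -/
noncomputable def tmulVec {n : ℕ} (A : TMat n) (x : Fin n → ℝ≥0) : Fin n → ℝ≥0 :=
  fun i => Finset.univ.sup fun j => A i j * x j

/-- Tropical identity matrix. -/
noncomputable def tId (n : ℕ) : TMat n := fun i j => if i = j then 1 else 0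

/-- Tropical matrix powers. -/
noncomputable def tpow {n : ℕ} (A : TMat n) : ℕ → TMat n
  | 0 => tId n
  | k + 1 => tmul A (tpow A k)

/-- Tropical (entrywise max) matrix addition. -/
noncomputable def tadd {n : ℕ} (A B : TMat n) : TMat n := fun i j => A i j ⊔ B i j

/-- Entrywise scalar multiplication. -/
noncomputable def tsmul {n : ℕ} (a : ℝ≥0) (A : TMat n) : TMat n := fun i j => a * A i j

/-- Tropical trace: tr A = max_i a_{ii}. -/
noncomputable def ttr {n : ℕ} (A : TMat n) : ℝ≥0 := Finset.univ.sup fun i => A i i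

/-- Tropical "determinant": Tr(A) = max_{k=1..n} tr(A^k). -/
noncomputable def tTr {n : ℕ} (A : TMat n) : ℝ≥0 :=
  (Finset.Icc 1 n).sup fun k => ttr (tpow A k)

/-- Kleene star: entrywise max of A^0, ..., A^{n-1}. -/
noncomputable def tstar {n : ℕ} (A : TMat n) : TMat n :=
  fun i j => (Finset.range n).sup fun k => tpow A k i j

/-- Tropical product of a finite chain of matrices F 0 ⊗ F 1 ⊗ ⋯ ⊗ F (k-1). -/
noncomputable def tchain {n : ℕ} : (k : ℕ) → (Fin k → TMat n) → TMat n
  | 0, _ => tId n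
  | k + 1, F => tmul (F 0) (tchain k fun t => F t.succ)

/-- Tuples of k nonnegative integers with sum m. -/
def tuples (k m : ℕ) : Finset (Fin k → Fin (m + 1)) :=
  Finset.univ.filter fun f => (∑ t, (f t : ℕ)) = m

/-- Tuples of k integers from {0,1} with sum l. -/
def binTuples (k l : ℕ) : Finset (Fin k → Fin 2) :=
  Finset.univ.filter fun j => (∑ t, (j t : ℕ)) = l

/-- The objective f_M(x) = max_{i,j} m_{ij} x_j / x_i. -/
noncomputable def fobj {n : ℕ} (M : TMat n) (x : Fin n → ℝ≥0) : ℝ≥0 :=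
  Finset.univ.sup fun p : Fin n × Fin n => M p.1 p.2 * x p.2 / x p.1

/-- Spectral radius: λ = max_{k=1..n} (tr(A^k))^{1/k}. -/
noncomputable def specRad {n : ℕ} (A : TMat n) : ℝ≥0 :=
  (Finset.Icc 1 n).sup fun k => ttr (tpow A k) ^ ((1 : ℝ) / k)

/-- σ = max over k=1..n-1, m=1..n-k and tuples (i_1,…,i_k) with sum m of
    (tr(A^{i_1} C ⋯ A^{i_k} C))^{1/m}. -/
noncomputable def sigmaC {n : ℕ} (A C : TMat n) : ℝ≥0 :=
  (Finset.Icc 1 (n - 1)).sup fun k =>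
    (Finset.Icc 1 (n - k)).sup fun m =>
      (tuples k m).sup fun f =>
        ttr (tchain k fun t => tmul (tpow A (f t : ℕ)) C) ^ ((1 : ℝ) / m)

/-- r_{k,l,m} = max over tuples (i_1,…,i_k) with sum m and (j_1,…,j_k) ∈ {0,1}^k with
    sum l of tr(A^{i_1} B^{j_1} C^{1-j_1} ⋯ A^{i_k} B^{j_k} C^{1-j_k}). -/
noncomputable def rklm {n : ℕ} (A B C : TMat n) (k l m : ℕ) : ℝ≥0 :=
  (tuples k m).sup fun f =>
    (binTuples k l).sup fun j =>
      ttr (tchain k fun t =>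
        tmul (tpow A (f t : ℕ)) (tmul (tpow B (j t : ℕ)) (tpow C (1 - (j t : ℕ)))))

/-- G(s) = max_{k,m,l} r_{k,l,m}^{1/l} s^{-m/l}. -/
noncomputable def Gfun {n : ℕ} (A B C : TMat n) (s : ℝ≥0) : ℝ≥0 :=
  (Finset.Icc 1 (n - 1)).sup fun k =>
    (Finset.Icc 1 (n - k)).sup fun m =>
      (Finset.Icc 1 k).sup fun l =>
        rklm A B C k l m ^ ((1 : ℝ) / l) * s ^ (-(m : ℝ) / l)

/-- H(t) = max_{k,m,l} r_{k,l,m}^{1/m} t^{-l/m}. -/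
noncomputable def Hfun {n : ℕ} (A B C : TMat n) (t : ℝ≥0) : ℝ≥0 :=
  (Finset.Icc 1 (n - 1)).sup fun k =>
    (Finset.Icc 1 (n - k)).sup fun m =>
      (Finset.Icc 1 k).sup fun l =>
        rklm A B C k l m ^ ((1 : ℝ) / m) * t ^ (-(l : ℝ) / m)

/-- Unconstrained r_{k,m} = max over tuples (i_1,…,i_k) with sum m of
    tr(A^{i_1} B ⋯ A^{i_k} B). -/
noncomputable def rkm {n : ℕ} (A B : TMat n) (k m : ℕ) : ℝ≥0 :=
  (tuples k m).sup fun f => ttr (tchain k fun t => tmul (tpow A (f t : ℕ)) B)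

/-- Unconstrained G(s) = max_{k,m} r_{k,m}^{1/k} s^{-m/k}. -/
noncomputable def Gfun0 {n : ℕ} (A B : TMat n) (s : ℝ≥0) : ℝ≥0 :=
  (Finset.Icc 1 (n - 1)).sup fun k =>
    (Finset.Icc 1 (n - k)).sup fun m =>
      rkm A B k m ^ ((1 : ℝ) / k) * s ^ (-(m : ℝ) / k)

/-- Unconstrained H(t) = max_{k,m} r_{k,m}^{1/m} t^{-k/m}. -/
noncomputable def Hfun0 {n : ℕ} (A B : TMat n) (t : ℝ≥0) : ℝ≥0 :=
  (Finset.Icc 1 (n - 1)).sup fun k =>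
    (Finset.Icc 1 (n - k)).sup fun m =>
      rkm A B k m ^ ((1 : ℝ) / m) * t ^ (-(k : ℝ) / m)

/-- Pareto-minimal points of a set V ⊆ ℝ≥0 × ℝ≥0. -/
def ParetoMin (V : Set (ℝ≥0 × ℝ≥0)) (p : ℝ≥0 × ℝ≥0) : Prop :=
  p ∈ V ∧ ¬∃ q ∈ V, q.1 ≤ p.1 ∧ q.2 ≤ p.2 ∧ q ≠ p

/-- Spectral radius of a 2×2 matrix: max(a_{11}, a_{22}, (a_{12}a_{21})^{1/2}). -/
noncomputable def lam2 (A : TMat 2) : ℝ≥0 :=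
  A 0 0 ⊔ A 1 1 ⊔ (A 0 1 * A 1 0) ^ ((1 : ℝ) / 2)

/-- The set of objective values over feasible positive vectors (2×2 case). -/
def V2 (A B C : TMat 2) : Set (ℝ≥0 × ℝ≥0) :=
  {p | ∃ x : Fin 2 → ℝ≥0, (∀ i, 0 < x i) ∧ tmulVec C x ≤ x ∧ p = (fobj A x, fobj B x)}

/-!
Feasibility `C ⊗ x ≤ x` of a positive `x` says exactly `f_C(x) ≤ 1`, and
`m_{ij} n_{ji} = (m_{ij} x_j / x_i)(n_{ji} x_i / x_j)` gives `tr(M ⊗ N) ≤ f_M(x) f_N(x)`.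
Hence every point of `V` lies in the region `a ≥ α := max(λ, tr(A ⊗ C))`,
`b ≥ β := max(μ, tr(B ⊗ C))`, `a b ≥ r := tr(A ⊗ B)`. Conversely, in dimension two each
requirement `f_M(1, t) ≤ c` confines `t` to the interval `[m₁₀ / c, c / m₀₁]`, and these intervals
meet as soon as `tr(M ⊗ N) ≤ c d` for all pairs of requirements. So every point of the region
dominates a point of `V`, both sets have the same Pareto-minimal points, and those of the region
are its corner `(α, β)` or, when `α β < r`, the arc of the hyperbola `a b = r` inside it.
-/

section

variable {n : ℕ}

lemma le_fobj (M : TMat n) (x : Fin n → ℝ≥0) (i j : Fin n) : M i j * x j / x i ≤ fobj M x :=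
  Finset.le_sup (f := fun p : Fin n × Fin n => M p.1 p.2 * x p.2 / x p.1) (Finset.mem_univ (i, j))

lemma fobj_le_iff {M : TMat n} {x : Fin n → ℝ≥0} (hx : ∀ i, 0 < x i) {c : ℝ≥0} :
    fobj M x ≤ c ↔ ∀ i j, M i j * x j ≤ c * x i := by
  simp only [fobj, Finset.sup_le_iff, Finset.mem_univ, true_implies, Prod.forall,
    div_le_iff₀ (hx _), mul_comm c]

lemma tmulVec_le_self_iff {C : TMat n} {x : Fin n → ℝ≥0} (hx : ∀ i, 0 < x i) :
    tmulVec C x ≤ x ↔ fobj C x ≤ 1 := by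
  simp only [fobj_le_iff hx, one_mul, Pi.le_def, tmulVec, Finset.sup_le_iff, Finset.mem_univ,
    true_implies]

lemma mul_le_ttr_tmul (A B : TMat n) (i j : Fin n) : A i j * B j i ≤ ttr (tmul A B) :=
  (Finset.le_sup (f := fun k => A i k * B k i) (Finset.mem_univ j)).trans
    (Finset.le_sup (f := fun i => tmul A B i i) (Finset.mem_univ i))

lemma ttr_tmul_comm (A B : TMat n) : ttr (tmul A B) = ttr (tmul B A) := by
  simp only [ttr, tmul]
  rw [Finset.sup_comm]
  simp only [mul_comm]

lemma ttr_tmul_le_fobj_mul (A B : TMat n) {x : Fin n → ℝ≥0} (hx : ∀ i, 0 < x i) :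
    ttr (tmul A B) ≤ fobj A x * fobj B x := by
  simp only [ttr, tmul, Finset.sup_le_iff, Finset.mem_univ, true_implies]
  intro i j
  have hi := (hx i).ne'
  have hj := (hx j).ne'
  calc A i j * B j i = (A i j * x j / x i) * (B j i * x i / x j) := by field_simp
    _ ≤ fobj A x * fobj B x := mul_le_mul' (le_fobj A x i j) (le_fobj B x j i)

end

lemma rpow_one_half_le_iff (x y : ℝ≥0) : x ^ ((1 : ℝ) / 2) ≤ y ↔ x ≤ y * y := by
  rw [← NNReal.sqrt_eq_rpow, NNReal.sqrt_le_iff_le_sq, sq]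

lemma lam2_le_iff (A : TMat 2) (c : ℝ≥0) :
    lam2 A ≤ c ↔ A 0 0 ≤ c ∧ A 1 1 ≤ c ∧ A 0 1 * A 1 0 ≤ c * c := by
  simp only [lam2, sup_le_iff, rpow_one_half_le_iff, and_assoc]

lemma lam2_le_fobj (A : TMat 2) {x : Fin 2 → ℝ≥0} (hx : ∀ i, 0 < x i) : lam2 A ≤ fobj A x := by
  have hdiag (k : Fin 2) : A k k ≤ fobj A x := by
    simpa [mul_div_assoc, (hx k).ne'] using le_fobj A x k k
  exact (lam2_le_iff A _).2
    ⟨hdiag 0, hdiag 1, (mul_le_ttr_tmul A A 0 1).trans (ttr_tmul_le_fobj_mul A A hx)⟩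

lemma ttr_tmul_self_le_of_lam2_le {A : TMat 2} {c : ℝ≥0} (h : lam2 A ≤ c) :
    ttr (tmul A A) ≤ c * c := by
  obtain ⟨h0, h1, h01⟩ := (lam2_le_iff A c).1 h
  simp only [ttr, tmul, Finset.sup_le_iff, Finset.mem_univ, true_implies]
  intro i k
  fin_cases i <;> fin_cases k
  exacts [mul_le_mul' h0 h0, h01, (mul_comm _ _).trans_le h01, mul_le_mul' h1 h1]

lemma lam2_sup_ttr_tmul_le_fobj (A C : TMat 2) {x : Fin 2 → ℝ≥0} (hx : ∀ i, 0 < x i)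
    (hCx : fobj C x ≤ 1) : lam2 A ⊔ ttr (tmul A C) ≤ fobj A x :=
  sup_le (lam2_le_fobj A hx)
    ((ttr_tmul_le_fobj_mul A C hx).trans (mul_le_of_le_one_right zero_le hCx))

lemma exists_pos_le_of_mul_le_one {L D : ℝ≥0} (h : L * D ≤ 1) :
    ∃ t, 0 < t ∧ L ≤ t ∧ t * D ≤ 1 := by
  refine ⟨L ⊔ (1 + D)⁻¹, lt_sup_of_lt_right (by positivity), le_sup_left, ?_⟩
  rw [NNReal.sup_mul]
  refine sup_le h ?_
  rw [inv_mul_le_iff₀ (by positivity), mul_one]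
  exact le_add_self

lemma exists_forall_fobj_le {ι : Type*} [Fintype ι] (M : ι → TMat 2) (a : ι → ℝ≥0)
    (ha : ∀ i, 0 < a i) (hM : ∀ i j, ttr (tmul (M i) (M j)) ≤ a i * a j) :
    ∃ x : Fin 2 → ℝ≥0, (∀ k, 0 < x k) ∧ ∀ i, fobj (M i) x ≤ a i := by
  have hdiag (i : ι) (k : Fin 2) : M i k k ≤ a i :=
    (mul_self_le_mul_self_iff zero_le zero_le).2 ((mul_le_ttr_tmul _ _ k k).trans (hM i i))
  set L := Finset.univ.sup fun i => M i 1 0 / a i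
  set D := Finset.univ.sup fun j => M j 0 1 / a j
  have hLD : L * D ≤ 1 := by
    simp only [L, D, NNReal.finset_sup_mul, NNReal.mul_finset_sup, Finset.sup_le_iff,
      Finset.mem_univ, true_implies]
    intro j i
    rw [div_mul_div_comm, div_le_one (mul_pos (ha i) (ha j))]
    exact (mul_le_ttr_tmul _ _ 1 0).trans (hM i j)
  obtain ⟨t, ht, hLt, htD⟩ := exists_pos_le_of_mul_le_one hLD
  have hx : ∀ k, 0 < ![1, t] k := by
    intro k
    fin_cases k
    exacts [one_pos, ht]
  refine ⟨![1, t], hx, fun i => (fobj_le_iff hx).2 fun k l => ?_⟩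
  have hlow : M i 1 0 ≤ a i * t := by
    rw [mul_comm, ← div_le_iff₀ (ha i)]
    exact (Finset.le_sup (f := fun i => M i 1 0 / a i) (Finset.mem_univ i)).trans hLt
  have hup : M i 0 1 * t ≤ a i := by
    rw [mul_comm, ← div_le_one (ha i), mul_div_assoc]
    exact (mul_le_mul' le_rfl
      (Finset.le_sup (f := fun j => M j 0 1 / a j) (Finset.mem_univ i))).trans htD
  fin_cases k <;> fin_cases l
  exacts [(mul_one _).trans_le ((hdiag i 0).trans_eq (mul_one _).symm),
    hup.trans_eq (mul_one _).symm, (mul_one _).trans_le hlow, mul_le_mul' (hdiag i 1) le_rfl]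

def hyperbolicRegion (α β r : ℝ≥0) : Set (ℝ≥0 × ℝ≥0) :=
  {q | α ≤ q.1 ∧ β ≤ q.2 ∧ r ≤ q.1 * q.2}

lemma minimal_mem_hyperbolicRegion_of_le {α β r : ℝ≥0} (h : r ≤ α * β) {p : ℝ≥0 × ℝ≥0} :
    Minimal (· ∈ hyperbolicRegion α β r) p ↔ p = (α, β) :=
  minimal_iff_eq ⟨le_rfl, le_rfl, h⟩ fun _ hq => ⟨hq.1, hq.2.1⟩

lemma minimal_mem_hyperbolicRegion_of_lt {α β r : ℝ≥0} (hα : 0 < α) (hβ : 0 < β)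
    (h : α * β < r) {p : ℝ≥0 × ℝ≥0} :
    Minimal (· ∈ hyperbolicRegion α β r) p ↔ ∃ a, α ≤ a ∧ a ≤ r / β ∧ p = (a, r / a) := by
  constructor
  · intro hp
    obtain ⟨hp1, hp2, hpr⟩ := hp.prop
    have hp1pos : 0 < p.1 := hα.trans_le hp1
    by_cases hcase : p.1 * β ≤ r
    · have hq : (p.1, r / p.1) ∈ hyperbolicRegion α β r :=
        ⟨hp1, (le_div_iff₀ hp1pos).2 (by rwa [mul_comm]),
          (mul_div_cancel₀ r hp1pos.ne').ge⟩
      have hqp : (p.1, r / p.1) ≤ p := ⟨le_rfl, (div_le_iff₀ hp1pos).2 (by rwa [mul_comm])⟩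
      exact ⟨p.1, hp1, (le_div_iff₀ hβ).2 hcase, (hp.eq_of_le hq hqp).symm⟩
    · have hq : (r / β, β) ∈ hyperbolicRegion α β r :=
        ⟨(le_div_iff₀ hβ).2 h.le, le_rfl, (div_mul_cancel₀ r hβ.ne').ge⟩
      have hqp : (r / β, β) ≤ p := ⟨(div_le_iff₀ hβ).2 (not_le.1 hcase).le, hp2⟩
      exact absurd ((le_div_iff₀ hβ).1 (hp.le_of_le hq hqp).1) hcase
  · rintro ⟨a, hαa, har, rfl⟩
    have ha : 0 < a := hα.trans_le hαa
    have hr : 0 < r / a := div_pos (zero_le.trans_lt h) ha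
    have hprod : a * (r / a) = r := mul_div_cancel₀ r ha.ne'
    refine ⟨⟨hαa, (le_div_iff₀ ha).2 (by rw [mul_comm]; exact (le_div_iff₀ hβ).1 har),
      hprod.ge⟩, ?_⟩
    rintro ⟨q1, q2⟩ ⟨-, -, hqr⟩ ⟨h1, h2⟩
    refine ⟨le_of_mul_le_mul_right ?_ hr, le_of_mul_le_mul_left ?_ ha⟩
    · exact hprod.trans_le (hqr.trans (mul_le_mul' le_rfl h2))
    · exact hprod.trans_le (hqr.trans (mul_le_mul' h1 le_rfl))

lemma paretoMin_iff_minimal (V : Set (ℝ≥0 × ℝ≥0)) (p : ℝ≥0 × ℝ≥0) :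
    ParetoMin V p ↔ Minimal (· ∈ V) p := by
  simp only [ParetoMin, minimal_iff, Prod.le_def, not_exists, not_and, not_not, and_imp,
    @eq_comm _ p]

lemma V2_subset_hyperbolicRegion (A B C : TMat 2) :
    V2 A B C ⊆ hyperbolicRegion (lam2 A ⊔ ttr (tmul A C)) (lam2 B ⊔ ttr (tmul B C))
      (ttr (tmul A B)) := by
  rintro _ ⟨x, hx, hCx, rfl⟩
  rw [tmulVec_le_self_iff hx] at hCx
  exact ⟨lam2_sup_ttr_tmul_le_fobj A C hx hCx, lam2_sup_ttr_tmul_le_fobj B C hx hCx,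
    ttr_tmul_le_fobj_mul A B hx⟩

lemma exists_le_mem_V2 (A B C : TMat 2) (hlam : 0 < lam2 A) (hmu : 0 < lam2 B)
    (hC : C 0 0 ⊔ C 1 1 ⊔ C 0 1 * C 1 0 ≤ 1) {q : ℝ≥0 × ℝ≥0}
    (hq : q ∈ hyperbolicRegion (lam2 A ⊔ ttr (tmul A C)) (lam2 B ⊔ ttr (tmul B C))
      (ttr (tmul A B))) :
    ∃ p, p ≤ q ∧ p ∈ V2 A B C := by
  obtain ⟨a, b⟩ := q
  obtain ⟨ha, hb, hr⟩ := hq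
  have hAC : ttr (tmul A C) ≤ a := le_sup_right.trans ha
  have hBC : ttr (tmul B C) ≤ b := le_sup_right.trans hb
  have hlamC : lam2 C ≤ 1 := by
    simp only [sup_le_iff] at hC
    exact (lam2_le_iff C 1).2 ⟨hC.1.1, hC.1.2, hC.2.trans_eq (one_mul 1).symm⟩
  have hpos : ∀ i, 0 < ![a, b, 1] i := by
    intro i
    fin_cases i
    exacts [hlam.trans_le (le_sup_left.trans ha), hmu.trans_le (le_sup_left.trans hb), one_pos]
  have hpair : ∀ i j,
      ttr (tmul (![A, B, C] i) (![A, B, C] j)) ≤ ![a, b, 1] i * ![a, b, 1] j := by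
    intro i j
    fin_cases i <;> fin_cases j
    · exact ttr_tmul_self_le_of_lam2_le (le_sup_left.trans ha)
    · exact hr
    · exact hAC.trans_eq (mul_one a).symm
    · exact (ttr_tmul_comm B A).trans_le (hr.trans_eq (mul_comm a b))
    · exact ttr_tmul_self_le_of_lam2_le (le_sup_left.trans hb)
    · exact hBC.trans_eq (mul_one b).symm
    · exact (ttr_tmul_comm C A).trans_le (hAC.trans_eq (one_mul a).symm)
    · exact (ttr_tmul_comm C B).trans_le (hBC.trans_eq (one_mul b).symm)
    · exact ttr_tmul_self_le_of_lam2_le hlamC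
  obtain ⟨x, hx, hM⟩ := exists_forall_fobj_le ![A, B, C] ![a, b, 1] hpos hpair
  exact ⟨_, ⟨hM 0, hM 1⟩, x, hx, (tmulVec_le_self_iff hx).2 (hM 2), rfl⟩

/-- Two-dimensional constrained bi-criteria problem: if
tr(A⊗B) ≤ (max(λ, tr(A⊗C))) (max(μ, tr(B⊗C))), the Pareto-minimal set of V is the single
point (max(λ, tr(A⊗C)), max(μ, tr(B⊗C))); otherwise it is the segment
{(α, tr(A⊗B)/α) : max(λ, tr(A⊗C)) ≤ α ≤ tr(A⊗B)/max(μ, tr(B⊗C))}. -/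
theorem stmt19 (A B C : TMat 2)
    (hlam : 0 < lam2 A) (hmu : 0 < lam2 B)
    (hC : C 0 0 ⊔ C 1 1 ⊔ C 0 1 * C 1 0 ≤ 1) :
    (ttr (tmul A B) ≤ (lam2 A ⊔ ttr (tmul A C)) * (lam2 B ⊔ ttr (tmul B C)) →
      {p | ParetoMin (V2 A B C) p} =
        {(lam2 A ⊔ ttr (tmul A C), lam2 B ⊔ ttr (tmul B C))}) ∧
    ((lam2 A ⊔ ttr (tmul A C)) * (lam2 B ⊔ ttr (tmul B C)) < ttr (tmul A B) →
      {p | ParetoMin (V2 A B C) p} =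
        {p | ∃ α : ℝ≥0, lam2 A ⊔ ttr (tmul A C) ≤ α ∧
          α ≤ ttr (tmul A B) / (lam2 B ⊔ ttr (tmul B C)) ∧
          p = (α, ttr (tmul A B) / α)}) := by
  have hV (p : ℝ≥0 × ℝ≥0) : ParetoMin (V2 A B C) p ↔
      Minimal (· ∈ hyperbolicRegion (lam2 A ⊔ ttr (tmul A C)) (lam2 B ⊔ ttr (tmul B C))
        (ttr (tmul A B))) p :=
    (paretoMin_iff_minimal _ p).trans (minimal_iff_minimal_of_imp_of_forall
      (fun _ hq => V2_subset_hyperbolicRegion A B C hq)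
      (fun _ hq => exists_le_mem_V2 A B C hlam hmu hC hq)).symm
  refine ⟨fun h => ?_, fun h => ?_⟩ <;> ext p <;>
    simp only [Set.mem_ofPred_eq, Set.mem_singleton_iff, hV]
  · exact minimal_mem_hyperbolicRegion_of_le h
  · exact minimal_mem_hyperbolicRegion_of_lt (hlam.trans_le le_sup_left)
      (hmu.trans_le le_sup_left) h
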